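/- arXiv:2009.02509 — 2 statements merged into one kernel-verified Lean document; each statement's English description precedes it below -/
import Mathlib

section
/- Let K and K̃ be symmetric positive semidefinite n×n real matrices with rank K = rank K̃ = r and Im(K̃) = Im(K), let Δm ∈ Im(K), and let U ∈ ℝ^{n×r} have orthonormal columns spanning Im(K). Then D⁺(Δm, K̃ ∥ K) := (1/2)[Δmᵀ K⁺ Δm + log det(Uᵀ K U) − log det(Uᵀ K̃ U) + tr(K⁺ K̃) − r] satisfies D⁺(Δm, K̃ ∥ K) ≥ 0, with equality if and only if Δm = 0 and K̃ = K. -/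
/-!
Since `Im K = Im U` and `Uᵀ U = 1`, the map `X ↦ U X Uᵀ` identifies `r × r` matrices with
matrices supported on `Im K`: `K = U A Uᵀ` and `K̃ = U B Uᵀ` with `A = Uᵀ K U`, `B = Uᵀ K̃ U`
positive definite, and `K⁺ = U A⁻¹ Uᵀ`. Writing `Δm = U x`, the functional becomes
`½ (xᵀ A⁻¹ x + tr (A⁻¹ B) - log det (A⁻¹ B) - r)`, an ordinary Gaussian KL divergence in
dimension `r`. With `A = S²`, the matrix `A⁻¹ B` is similar to the positive definite `S⁻¹ B S⁻¹`,
so the log-det term is `∑ (λ - 1 - log λ)` over its eigenvalues, which is nonnegative and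
vanishes only when all `λ = 1`.
-/

open Matrix

/-- `B` is the Moore–Penrose pseudoinverse of `A`. -/
def IsMoorePenroseInv {a b : ℕ} (A : Matrix (Fin a) (Fin b) ℝ)
    (B : Matrix (Fin b) (Fin a) ℝ) : Prop :=
  A * B * A = A ∧ B * A * B = B ∧ (A * B)ᵀ = A * B ∧ (B * A)ᵀ = B * A

noncomputable def logDetDivergence {ι : Type*} [Fintype ι] [DecidableEq ι]
    (B A : Matrix ι ι ℝ) : ℝ :=
  (A⁻¹ * B).trace - Real.log (A⁻¹ * B).det - Fintype.card ι

lemma Matrix.PosDef.dotProduct_mulVec_eq_zero_iff {R n : Type*} [CommRing R] [PartialOrder R]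
    [StarRing R] [Fintype n] {M : Matrix n n R} (hM : M.PosDef) {x : n → R} :
    star x ⬝ᵥ M *ᵥ x = 0 ↔ x = 0 := by
  refine ⟨fun h => ?_, fun h => by rw [h, mulVec_zero, dotProduct_zero]⟩
  by_contra hx
  exact (hM.dotProduct_mulVec_pos hx).ne' h

section LogDetDivergence

variable {ι : Type*} [Fintype ι] [DecidableEq ι] {M A B S : Matrix ι ι ℝ}

lemma logDetDivergence_eq_log_det_sub_log_det (hA : A.det ≠ 0) (hB : B.det ≠ 0) :
    logDetDivergence B A =
      Real.log A.det - Real.log B.det + (A⁻¹ * B).trace - Fintype.card ι := by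
  rw [logDetDivergence, det_mul, det_nonsing_inv, Ring.inverse_eq_inv',
    Real.log_mul (inv_ne_zero hA) hB, Real.log_inv]
  ring

namespace Matrix.PosDef

lemma trace_sub_log_det_sub_card_eq_sum (hM : M.PosDef) :
    M.trace - Real.log M.det - Fintype.card ι =
      ∑ i, (hM.1.eigenvalues i - 1 - Real.log (hM.1.eigenvalues i)) := by
  simp only [hM.1.trace_eq_sum_eigenvalues, hM.1.det_eq_prod_eigenvalues,
    RCLike.ofReal_real_eq_id, id, Real.log_prod fun i _ => (hM.eigenvalues_pos i).ne',
    Finset.sum_sub_distrib, Finset.sum_const, Finset.card_univ, nsmul_eq_mul, mul_one]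
  ring

lemma trace_sub_log_det_sub_card_nonneg (hM : M.PosDef) :
    0 ≤ M.trace - Real.log M.det - Fintype.card ι := by
  rw [hM.trace_sub_log_det_sub_card_eq_sum]
  exact Finset.sum_nonneg fun i _ => by
    linarith [Real.log_le_sub_one_of_pos (hM.eigenvalues_pos i)]

lemma trace_sub_log_det_sub_card_eq_zero_iff (hM : M.PosDef) :
    M.trace - Real.log M.det - Fintype.card ι = 0 ↔ M = 1 := by
  refine ⟨fun h => ?_, fun h => by rw [h, trace_one, det_one, Real.log_one]; ring⟩
  rw [hM.trace_sub_log_det_sub_card_eq_sum, Finset.sum_eq_zero_iff_of_nonneg fun i _ => by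
    linarith [Real.log_le_sub_one_of_pos (hM.eigenvalues_pos i)]] at h
  have h_one : hM.1.eigenvalues = fun _ => 1 := funext fun i => by
    by_contra hi
    linarith [h i (Finset.mem_univ i), Real.log_lt_sub_one_of_pos (hM.eigenvalues_pos i) hi]
  rw [hM.1.spectral_theorem, RCLike.ofReal_real_eq_id, Function.id_comp, h_one, diagonal_one,
    map_one]

open scoped MatrixOrder in
lemma exists_posDef_mul_self_eq (hA : A.PosDef) : ∃ S : Matrix ι ι ℝ, S.PosDef ∧ S * S = A :=
  ⟨CFC.sqrt A, hA.isStrictlyPositive.sqrt.posDef, CFC.sqrt_mul_sqrt_self A hA.posSemidef.nonneg⟩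

lemma inv_mul_mul_inv (hB : B.PosDef) (hS : S.PosDef) : (S⁻¹ * B * S⁻¹).PosDef := by
  have h := hB.conjTranspose_mul_mul_same (mulVec_injective_of_isUnit hS.inv.isUnit)
  rwa [hS.inv.isHermitian.eq] at h

lemma logDetDivergence_mul_self (hS : S.PosDef) (B : Matrix ι ι ℝ) :
    logDetDivergence B (S * S) =
      (S⁻¹ * B * S⁻¹).trace - Real.log (S⁻¹ * B * S⁻¹).det - Fintype.card ι := by
  have h_conj : (S * S)⁻¹ * B = S⁻¹ * (S⁻¹ * B * S⁻¹) * S := by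
    simp only [mul_inv_rev, Matrix.mul_assoc,
      nonsing_inv_mul _ ((isUnit_iff_isUnit_det S).mp hS.isUnit), Matrix.mul_one]
  rw [logDetDivergence, h_conj, trace_conj' hS.isUnit, det_conj' hS.isUnit]

lemma logDetDivergence_nonneg (hA : A.PosDef) (hB : B.PosDef) : 0 ≤ logDetDivergence B A := by
  obtain ⟨S, hS, rfl⟩ := hA.exists_posDef_mul_self_eq
  rw [logDetDivergence_mul_self hS]
  exact (hB.inv_mul_mul_inv hS).trace_sub_log_det_sub_card_nonneg

lemma logDetDivergence_eq_zero_iff (hA : A.PosDef) (hB : B.PosDef) :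
    logDetDivergence B A = 0 ↔ B = A := by
  obtain ⟨S, hS, rfl⟩ := hA.exists_posDef_mul_self_eq
  have hS' : IsUnit S.det := (isUnit_iff_isUnit_det S).mp hS.isUnit
  rw [logDetDivergence_mul_self hS, (hB.inv_mul_mul_inv hS).trace_sub_log_det_sub_card_eq_zero_iff]
  constructor
  · intro h
    calc B = S * (S⁻¹ * B * S⁻¹) * S := by
          simp only [Matrix.mul_assoc, mul_nonsing_inv_cancel_left _ _ hS', nonsing_inv_mul _ hS',
            Matrix.mul_one]
      _ = S * S := by rw [h, Matrix.mul_one]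
  · rintro rfl
    rw [← Matrix.mul_assoc, nonsing_inv_mul _ hS', Matrix.one_mul, mul_nonsing_inv _ hS']

lemma dotProduct_inv_mulVec_add_logDetDivergence_nonneg (hA : A.PosDef) (hB : B.PosDef)
    (x : ι → ℝ) : 0 ≤ x ⬝ᵥ A⁻¹ *ᵥ x + logDetDivergence B A :=
  add_nonneg (hA.inv.posSemidef.dotProduct_mulVec_nonneg x) (hA.logDetDivergence_nonneg hB)

lemma dotProduct_inv_mulVec_add_logDetDivergence_eq_zero_iff (hA : A.PosDef) (hB : B.PosDef)
    (x : ι → ℝ) : x ⬝ᵥ A⁻¹ *ᵥ x + logDetDivergence B A = 0 ↔ x = 0 ∧ B = A := by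
  have hq : 0 ≤ x ⬝ᵥ A⁻¹ *ᵥ x := hA.inv.posSemidef.dotProduct_mulVec_nonneg x
  have hq_eq_zero : x ⬝ᵥ A⁻¹ *ᵥ x = 0 ↔ x = 0 := by
    simpa only [star_trivial] using hA.inv.dotProduct_mulVec_eq_zero_iff (x := x)
  rw [add_eq_zero_iff_of_nonneg hq (hA.logDetDivergence_nonneg hB), hq_eq_zero,
    hA.logDetDivergence_eq_zero_iff hB]

end Matrix.PosDef

end LogDetDivergence

section Isometry

variable {R : Type*} [CommRing R] {m k : Type*} [Fintype m] [Fintype k] [DecidableEq k]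
  {U : Matrix m k R}

lemma mulVec_eq_zero_iff_of_transpose_mul_eq_one (hU : Uᵀ * U = 1) {x : k → R} :
    U *ᵥ x = 0 ↔ x = 0 := by
  refine ⟨fun h => ?_, fun h => by rw [h, mulVec_zero]⟩
  rw [← one_mulVec x, ← hU, ← mulVec_mulVec, h, mulVec_zero]

lemma mul_mul_transpose_mul_mul_mul_transpose (hU : Uᵀ * U = 1) (X Y : Matrix k k R) :
    U * X * Uᵀ * (U * Y * Uᵀ) = U * (X * Y) * Uᵀ := by
  simp only [Matrix.mul_assoc]
  rw [← Matrix.mul_assoc Uᵀ U, hU, Matrix.one_mul]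

lemma mul_mul_transpose_inj (hU : Uᵀ * U = 1) {X Y : Matrix k k R} :
    U * X * Uᵀ = U * Y * Uᵀ ↔ X = Y := by
  have h_compress (Z : Matrix k k R) : Uᵀ * (U * Z * Uᵀ) * U = Z := by
    simp only [← Matrix.mul_assoc, hU, Matrix.one_mul]
    rw [Matrix.mul_assoc, hU, Matrix.mul_one]
  exact ⟨fun h => by rw [← h_compress X, h, h_compress], fun h => h ▸ rfl⟩

lemma trace_mul_mul_transpose (hU : Uᵀ * U = 1) (X : Matrix k k R) :
    (U * X * Uᵀ).trace = X.trace := by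
  rw [trace_mul_comm, ← Matrix.mul_assoc, hU, Matrix.one_mul]

lemma dotProduct_mul_mul_transpose_mulVec (hU : Uᵀ * U = 1) (X : Matrix k k R) (x : k → R) :
    U *ᵥ x ⬝ᵥ (U * X * Uᵀ) *ᵥ U *ᵥ x = x ⬝ᵥ X *ᵥ x := by
  rw [mulVec_mulVec, Matrix.mul_assoc, hU, Matrix.mul_one, ← mulVec_mulVec, dotProduct_mulVec,
    ← mulVec_transpose, mulVec_mulVec, hU, one_mulVec]

end Isometry

section Range

variable {m k : Type*} [Fintype m] [Fintype k] [DecidableEq k] {U : Matrix m k ℝ}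
  {L : Matrix m m ℝ}

lemma mul_transpose_mulVec_of_mem_range (hU : Uᵀ * U = 1) {v : m → ℝ}
    (hv : v ∈ LinearMap.range U.mulVecLin) : U *ᵥ Uᵀ *ᵥ v = v := by
  obtain ⟨x, rfl⟩ := hv
  rw [mulVecLin_apply, mulVec_mulVec x Uᵀ U, hU, one_mulVec]

lemma mul_mul_transpose_mul_mul_transpose_eq (hU : Uᵀ * U = 1) (hL : L.IsSymm)
    (hLU : LinearMap.range L.mulVecLin ≤ LinearMap.range U.mulVecLin) :
    U * (Uᵀ * L * U) * Uᵀ = L := by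
  have h_proj : U * Uᵀ * L = L := ext_iff_mulVec.mpr fun v => by
    rw [← mulVec_mulVec, ← mulVec_mulVec]
    exact mul_transpose_mulVec_of_mem_range hU (hLU ⟨v, rfl⟩)
  have h_proj' : L * (U * Uᵀ) = L := by
    simpa only [transpose_mul, transpose_transpose, hL.eq, Matrix.mul_assoc] using
      congrArg transpose h_proj
  simp only [← Matrix.mul_assoc] at h_proj ⊢
  rw [h_proj, Matrix.mul_assoc, h_proj']

lemma eq_zero_of_mem_range_of_mulVec_eq_zero (hL : L.IsSymm) {v : m → ℝ}
    (hv : v ∈ LinearMap.range L.mulVecLin) (h : L *ᵥ v = 0) : v = 0 := by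
  obtain ⟨y, rfl⟩ := hv
  rw [mulVecLin_apply] at h ⊢
  rw [← dotProduct_self_eq_zero]
  nth_rw 1 [← hL.eq]
  rw [mulVec_transpose, ← dotProduct_mulVec, h, dotProduct_zero]

lemma Matrix.PosSemidef.posDef_transpose_mul_mul (hL : L.PosSemidef) (hU : Uᵀ * U = 1)
    (hUL : LinearMap.range U.mulVecLin ≤ LinearMap.range L.mulVecLin) :
    (Uᵀ * L * U).PosDef := by
  have hpsd : (Uᵀ * L * U).PosSemidef := hL.conjTranspose_mul_mul_same U
  refine .of_dotProduct_mulVec_pos hpsd.isHermitian fun x hx => ?_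
  refine (hpsd.dotProduct_mulVec_nonneg x).lt_of_ne' fun h0 => hx ?_
  have hLUx : L *ᵥ U *ᵥ x = 0 := by
    rw [Matrix.mul_assoc, ← mulVec_mulVec, dotProduct_mulVec, star_trivial, vecMul_transpose,
      ← mulVec_mulVec] at h0
    rwa [← hL.dotProduct_mulVec_zero_iff, star_trivial]
  exact (mulVec_eq_zero_iff_of_transpose_mul_eq_one hU).mp <|
    eq_zero_of_mem_range_of_mulVec_eq_zero (isHermitian_iff_isSymm.mp hL.isHermitian)
      (hUL ⟨x, rfl⟩) hLUx

end Range

lemma IsMoorePenroseInv.unique {a b : ℕ} {A : Matrix (Fin a) (Fin b) ℝ}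
    {B C : Matrix (Fin b) (Fin a) ℝ} (hB : IsMoorePenroseInv A B) (hC : IsMoorePenroseInv A C) :
    B = C := by
  obtain ⟨hABA, hBAB, hAB, hBA⟩ := hB
  obtain ⟨hACA, hCAC, hAC, hCA⟩ := hC
  have h_left : A * B = A * C :=
    calc A * B = (A * C) * (A * B) := by rw [← Matrix.mul_assoc, hACA]
      _ = (A * C)ᵀ * (A * B)ᵀ := by rw [hAC, hAB]
      _ = (A * B * A * C)ᵀ := by simp only [transpose_mul, Matrix.mul_assoc]
      _ = A * C := by rw [hABA, hAC]
  have h_right : B * A = C * A :=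
    calc B * A = (B * A) * (C * A) := by rw [Matrix.mul_assoc B, ← Matrix.mul_assoc A, hACA]
      _ = (B * A)ᵀ * (C * A)ᵀ := by rw [hBA, hCA]
      _ = (C * (A * B * A))ᵀ := by simp only [transpose_mul, Matrix.mul_assoc]
      _ = C * A := by rw [hABA, hCA]
  rw [← hBAB, Matrix.mul_assoc, h_left, ← Matrix.mul_assoc, h_right, hCAC]

lemma isMoorePenroseInv_mul_mul_transpose {n r : ℕ} {U : Matrix (Fin n) (Fin r) ℝ}
    (hU : Uᵀ * U = 1) {A : Matrix (Fin r) (Fin r) ℝ} (hA : IsUnit A.det) :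
    IsMoorePenroseInv (U * A * Uᵀ) (U * A⁻¹ * Uᵀ) := by
  refine ⟨?_, ?_, ?_, ?_⟩
  · rw [mul_mul_transpose_mul_mul_mul_transpose hU, mul_mul_transpose_mul_mul_mul_transpose hU,
      nonsing_inv_mul_cancel_right _ _ hA]
  · rw [mul_mul_transpose_mul_mul_mul_transpose hU, mul_mul_transpose_mul_mul_mul_transpose hU,
      mul_nonsing_inv_cancel_right _ _ hA]
  all_goals
    rw [mul_mul_transpose_mul_mul_mul_transpose hU]
    simp only [mul_nonsing_inv _ hA, nonsing_inv_mul _ hA, transpose_mul, transpose_transpose,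
      transpose_one, Matrix.mul_assoc]

theorem degenerate_gaussian_kl_nonneg_and_eq_zero_iff_general {n r : ℕ}
    (K Kt Kp : Matrix (Fin n) (Fin n) ℝ)
    (hK : K.PosSemidef) (hKt : Kt.PosSemidef)
    (hIm : LinearMap.range Kt.mulVecLin = LinearMap.range K.mulVecLin)
    (hKp : IsMoorePenroseInv K Kp)
    (Δm : Fin n → ℝ) (hΔm : Δm ∈ LinearMap.range K.mulVecLin)
    (U : Matrix (Fin n) (Fin r) ℝ) (hU : Uᵀ * U = 1)
    (hUIm : LinearMap.range U.mulVecLin = LinearMap.range K.mulVecLin) :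
    0 ≤ (1 / 2 : ℝ) * (Δm ⬝ᵥ (Kp *ᵥ Δm) + Real.log (Uᵀ * K * U).det
        - Real.log (Uᵀ * Kt * U).det + (Kp * Kt).trace - (r : ℝ)) ∧
    ((1 / 2 : ℝ) * (Δm ⬝ᵥ (Kp *ᵥ Δm) + Real.log (Uᵀ * K * U).det
        - Real.log (Uᵀ * Kt * U).det + (Kp * Kt).trace - (r : ℝ)) = 0 ↔
      Δm = 0 ∧ Kt = K) := by
  set A := Uᵀ * K * U
  set B := Uᵀ * Kt * U
  have hA : A.PosDef := hK.posDef_transpose_mul_mul hU hUIm.le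
  have hB : B.PosDef := hKt.posDef_transpose_mul_mul hU (hUIm.trans hIm.symm).le
  have hKA : U * A * Uᵀ = K := mul_mul_transpose_mul_mul_transpose_eq hU
    (isHermitian_iff_isSymm.mp hK.isHermitian) hUIm.ge
  have hKtB : U * B * Uᵀ = Kt := mul_mul_transpose_mul_mul_transpose_eq hU
    (isHermitian_iff_isSymm.mp hKt.isHermitian) (hIm.trans hUIm.symm).le
  have hKp_eq : Kp = U * A⁻¹ * Uᵀ := by
    have h := isMoorePenroseInv_mul_mul_transpose hU hA.det_pos.ne'.isUnit
    rw [hKA] at h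
    exact hKp.unique h
  obtain ⟨x, rfl⟩ : ∃ x, U *ᵥ x = Δm := by rwa [← hUIm] at hΔm
  have h_expr : U *ᵥ x ⬝ᵥ (Kp *ᵥ U *ᵥ x) + Real.log A.det - Real.log B.det + (Kp * Kt).trace
      - r = x ⬝ᵥ A⁻¹ *ᵥ x + logDetDivergence B A := by
    rw [hKp_eq, ← hKtB, dotProduct_mul_mul_transpose_mulVec hU,
      mul_mul_transpose_mul_mul_mul_transpose hU, trace_mul_mul_transpose hU,
      logDetDivergence_eq_log_det_sub_log_det hA.det_pos.ne' hB.det_pos.ne', Fintype.card_fin]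
    ring
  rw [h_expr, mul_eq_zero, hA.dotProduct_inv_mulVec_add_logDetDivergence_eq_zero_iff hB,
    mulVec_eq_zero_iff_of_transpose_mul_eq_one hU, ← hKA, ← hKtB, mul_mul_transpose_inj hU]
  exact ⟨mul_nonneg (by norm_num) (hA.dotProduct_inv_mulVec_add_logDetDivergence_nonneg hB x),
    by norm_num⟩

/-- Degenerate (low-rank) Gaussian Kullback–Leibler functional:
nonnegativity and the equality case. -/
theorem degenerate_gaussian_kl_nonneg_and_eq_zero_iff {n r : ℕ}
    (K Kt Kp : Matrix (Fin n) (Fin n) ℝ)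
    (hK : K.PosSemidef) (hKt : Kt.PosSemidef)
    (hrK : K.rank = r) (hrKt : Kt.rank = r)
    (hIm : LinearMap.range Kt.mulVecLin = LinearMap.range K.mulVecLin)
    (hKp : IsMoorePenroseInv K Kp)
    (Δm : Fin n → ℝ) (hΔm : Δm ∈ LinearMap.range K.mulVecLin)
    (U : Matrix (Fin n) (Fin r) ℝ) (hU : Uᵀ * U = 1)
    (hUIm : LinearMap.range U.mulVecLin = LinearMap.range K.mulVecLin) :
    0 ≤ (1 / 2 : ℝ) * (Δm ⬝ᵥ (Kp *ᵥ Δm) + Real.log (Uᵀ * K * U).det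
        - Real.log (Uᵀ * Kt * U).det + (Kp * Kt).trace - (r : ℝ)) ∧
    ((1 / 2 : ℝ) * (Δm ⬝ᵥ (Kp *ᵥ Δm) + Real.log (Uᵀ * K * U).det
        - Real.log (Uᵀ * Kt * U).det + (Kp * Kt).trace - (r : ℝ)) = 0 ↔
      Δm = 0 ∧ Kt = K) :=
  degenerate_gaussian_kl_nonneg_and_eq_zero_iff_general K Kt Kp hK hKt hIm hKp Δm hΔm U hU hUIm
end

section
/- Let P be a symmetric positive semidefinite n×n real matrix, let H ∈ ℝ^{q×n} have full row rank with Im(Hᵀ) ⊆ Im(P), and let P⁺ be the Moore–Penrose pseudoinverse of P. Then the q×q matrix H P⁺ Hᵀ is symmetric positive definite (in particular invertible). -/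
/-!
Since `range Hᵀ ⊆ range P`, we can write `Hᵀ = P K`, and then `H = Kᵀ P` by symmetry of `P`.
Hence `H P⁺ Hᵀ = Kᵀ (P P⁺ P) K = Kᵀ P K`, which is positive semidefinite. If `xᵀ Kᵀ P K x = 0`
then `P K x = 0` because `P` is positive semidefinite, i.e. `Hᵀ x = 0`, and `x = 0` because the
rows of `H` are linearly independent.
-/

open Matrix

namespace Matrix

open scoped ComplexOrder

theorem linearIndependent_row_of_rank_eq_card {R m n : Type*} [Field R] [Fintype m] [Fintype n]
    {M : Matrix m n R} (hM : M.rank = Fintype.card m) : LinearIndependent R M.row :=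
  linearIndependent_iff_card_eq_finrank_span.mpr <| by
    rw [Set.finrank, ← rank_eq_finrank_span_row, hM]

theorem exists_mul_eq_of_range_mulVecLin_le {R m n k : Type*} [CommSemiring R] [Fintype n]
    [Fintype k] {A : Matrix m n R} {B : Matrix m k R}
    (hAB : LinearMap.range B.mulVecLin ≤ LinearMap.range A.mulVecLin) :
    ∃ K : Matrix n k R, A * K = B := by
  classical
  choose v hv using fun j : k => hAB ⟨Pi.single j 1, rfl⟩
  refine ⟨(of v)ᵀ, ?_⟩
  ext i j
  have hcol := congrFun (hv j) i
  rw [mulVecLin_apply, mulVecLin_apply, mulVec_single_one] at hcol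
  simpa [mul_apply, mulVec, dotProduct] using hcol

theorem PosSemidef.posDef_conjTranspose_mul_mul_same {𝕜 m n : Type*} [RCLike 𝕜] [Fintype m]
    [Fintype n] {A : Matrix n n 𝕜} (hA : A.PosSemidef) {B : Matrix n m 𝕜}
    (hAB : Function.Injective (A * B).mulVec) : (Bᴴ * A * B).PosDef := by
  refine .of_dotProduct_mulVec_pos (isHermitian_conjTranspose_mul_mul B hA.1) fun x hx => ?_
  have hform : star x ⬝ᵥ (Bᴴ * A * B) *ᵥ x = star (B *ᵥ x) ⬝ᵥ A *ᵥ (B *ᵥ x) := by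
    simp only [star_mulVec, dotProduct_mulVec, vecMul_vecMul, ← mulVec_mulVec]
  rw [hform]
  refine (hA.dotProduct_mulVec_nonneg _).lt_of_ne fun hzero => hx <| hAB ?_
  rw [mulVec_zero, ← mulVec_mulVec]
  exact (hA.dotProduct_mulVec_zero_iff _).mp hzero.symm

end Matrix

/-- If `P` is symmetric positive semidefinite, `H` has full row rank and
`Im(Hᵀ) ⊆ Im(P)`, then `H P⁺ Hᵀ` is symmetric positive definite. -/
theorem HPplusHT_posDef {n q : ℕ}
    (P Pp : Matrix (Fin n) (Fin n) ℝ) (hP : P.PosSemidef)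
    (hPp : IsMoorePenroseInv P Pp)
    (H : Matrix (Fin q) (Fin n) ℝ) (hH : H.rank = q)
    (hIm : LinearMap.range Hᵀ.mulVecLin ≤ LinearMap.range P.mulVecLin) :
    (H * Pp * Hᵀ).PosDef := by
  obtain ⟨K, hPK⟩ := exists_mul_eq_of_range_mulVecLin_le hIm
  have hHK : H = Kᵀ * P := by
    rw [← transpose_transpose H, ← hPK, transpose_mul, (isHermitian_iff_isSymm.mp hP.1).eq]
  have hsandwich : H * Pp * Hᵀ = Kᴴ * P * K := by
    rw [← hPK, hHK, conjTranspose_eq_transpose_of_trivial]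
    conv_rhs => rw [← hPp.1]
    simp only [Matrix.mul_assoc]
  have hHinj : Function.Injective Hᵀ.mulVec :=
    mulVec_injective_iff.mpr <| by
      rw [col_transpose]
      exact linearIndependent_row_of_rank_eq_card (by rw [hH, Fintype.card_fin])
  rw [hsandwich]
  exact hP.posDef_conjTranspose_mul_mul_same (by rwa [hPK])
end
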